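/- Let $k$ be a field, $q \in k$ a primitive $N$-th root of unity with $N$ odd, $N > 1$, and let $q_{kl}$ satisfy the Cartan-type conditions $q_{ll} = q$, $q_{l,l+1} q_{l+1,l} = q^{-1}$, and $q_{kl} q_{lk} = 1$ for $|k-l| \geq 2$. In the algebra $R_{(1)}$ generated by $x_i, \dots, x_{j-1}$ with relations $x_l x_{l+1} = q_{l,l+1} x_{l+1} x_l$ for all consecutive $l$ and $x_k x_l = q_{kl} x_l x_k$ for $|k-l| \geq 2$, the reverse root vector $x_{ji}$ (defined by $x_{i+1,i} = x_i$ and $x_{ji} = [x_{j-1}, x_{j-1,i}]_c$) satisfies $x_{ji} = (q-1)^{j-i-1} \big(\prod_{i \leq k < l < j} q_{lk}\big)\, x_i x_{i+1} \cdots x_{j-1}$. -/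

import Mathlib

/-!
In `R_{(1)}` the generator `x_{j-1}` skew-commutes with every `x_t`, `i ≤ t < j - 1`: with
factor `q_{j-1,t}` for `t < j - 2`, and with factor `q_{j-2,j-1}⁻¹ = q q_{j-1,j-2}` for
`t = j - 2`. Hence it skew-commutes with the monomial `x_i ⋯ x_{j-2}` with factor
`q ∏_{i ≤ t < j-1} q_{j-1,t}`, which is `q` times the factor in the braided commutator
`[x_{j-1}, -]_c`. So if `x_{j-1,i} = c x_i ⋯ x_{j-2}`, then
`x_{ji} = c (q - 1) (∏_t q_{j-1,t}) x_i ⋯ x_{j-1}`, and the formula follows by induction on `j`.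
-/

/-- The reverse root vector `x_{ji}` (first argument `j`, second `i`, `i < j`):
`x_{i+1,i} = x_i` and, for `j - i ≥ 2`,
`x_{ji} = [x_{j-1}, x_{j-1,i}]_c
        = x_{j-1} x_{j-1,i} - (q_{j-1,i} q_{j-1,i+1} ⋯ q_{j-1,j-2}) • x_{j-1,i} x_{j-1}`. -/
def revRootVec {k A : Type*} [CommRing k] [Ring A] [Algebra k A]
    (x : ℕ → A) (Q : ℕ → ℕ → k) : ℕ → ℕ → A
  | j, i =>
    if j ≤ i + 1 then x i
    else x (j - 1) * revRootVec x Q (j - 1) i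
      - (∏ p ∈ Finset.Ico i (j - 1), Q (j - 1) p) • (revRootVec x Q (j - 1) i * x (j - 1))
  termination_by j i => j - i
  decreasing_by all_goals omega

open Finset

theorem mul_list_prod_map_eq_smul {k A ι : Type*} [CommSemiring k] [Semiring A] [Algebra k A]
    (z : A) (f : ι → A) (c : ι → k) (l : List ι)
    (h : ∀ t ∈ l, z * f t = c t • (f t * z)) :
    z * (l.map f).prod = (l.map c).prod • ((l.map f).prod * z) := by
  induction l with
  | nil => simp
  | cons t l ih =>
    rw [List.forall_mem_cons] at h
    simp only [List.map_cons, List.prod_cons]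
    rw [← mul_assoc, h.1, smul_mul_assoc, mul_assoc, ih h.2, mul_smul_comm, smul_smul, mul_assoc]

theorem prod_map_range'_eq_prod_Ico {M : Type*} [CommMonoid M] (f : ℕ → M) (a n : ℕ) :
    ((List.range' a n).map f).prod = ∏ t ∈ Ico a (a + n), f t := by
  rw [← List.toFinset_range'_1, List.prod_toFinset _ List.nodup_range']

theorem prod_map_range'_sub_succ {M : Type*} [Monoid M] (f : ℕ → M) {i n : ℕ}
    (hin : i ≤ n) :
    ((List.range' i (n + 1 - i)).map f).prod = ((List.range' i (n - i)).map f).prod * f n := by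
  rw [show n + 1 - i = n - i + 1 by omega, List.range'_1_concat, List.map_append,
    List.prod_append, Nat.add_sub_cancel' hin, List.map_singleton, List.prod_singleton]

section revRootVec

variable {k A : Type*} [CommRing k] [Ring A] [Algebra k A] (x : ℕ → A) (Q : ℕ → ℕ → k)

theorem revRootVec_succ_self (i : ℕ) : revRootVec x Q (i + 1) i = x i := by
  rw [revRootVec, if_pos le_rfl]

theorem revRootVec_succ {i n : ℕ} (hin : i < n) :
    revRootVec x Q (n + 1) i
      = x n * revRootVec x Q n i - (∏ p ∈ Ico i n, Q n p) • (revRootVec x Q n i * x n) := by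
  rw [revRootVec, if_neg (by omega), Nat.add_sub_cancel]

variable {x Q}

theorem revRootVec_succ_eq_smul_of_mul_eq {i n : ℕ} (hin : i < n) {q c : k} {P : A}
    (hP : revRootVec x Q n i = c • P)
    (hcomm : x n * P = (q * ∏ p ∈ Ico i n, Q n p) • (P * x n)) :
    revRootVec x Q (n + 1) i = (c * (q - 1) * ∏ p ∈ Ico i n, Q n p) • (P * x n) := by
  rw [revRootVec_succ x Q hin, hP, mul_smul_comm, hcomm, smul_mul_assoc, smul_smul, smul_smul,
    ← sub_smul]
  congr 1
  ring

end revRootVec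

section Cartan

variable {k A : Type*} [Field k] [Ring A] [Algebra k A]
variable {x : ℕ → A} {Q : ℕ → ℕ → k} {q : k}

theorem mul_prod_range'_eq_smul (hq : q ≠ 0) {i m : ℕ} (him : i ≤ m)
    (hQ : Q m (m + 1) * Q (m + 1) m = q⁻¹)
    (hadj : x m * x (m + 1) = Q m (m + 1) • (x (m + 1) * x m))
    (hfar : ∀ t, i ≤ t → t < m → x (m + 1) * x t = Q (m + 1) t • (x t * x (m + 1))) :
    x (m + 1) * ((List.range' i (m + 1 - i)).map x).prod
      = (q * ∏ p ∈ Ico i (m + 1), Q (m + 1) p) •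
          (((List.range' i (m + 1 - i)).map x).prod * x (m + 1)) := by
  have hswap : x (m + 1) * x m = (q * Q (m + 1) m) • (x m * x (m + 1)) := by
    have hscalar : q * Q (m + 1) m * Q m (m + 1) = 1 := by
      rw [mul_assoc, mul_comm (Q (m + 1) m), hQ, mul_inv_cancel₀ hq]
    rw [hadj, smul_smul, hscalar, one_smul]
  have hpast : x (m + 1) * ((List.range' i (m - i)).map x).prod
      = (∏ p ∈ Ico i m, Q (m + 1) p) •
          (((List.range' i (m - i)).map x).prod * x (m + 1)) := by
    rw [mul_list_prod_map_eq_smul _ _ (Q (m + 1)) _ fun t ht => by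
      rw [List.mem_range'_1] at ht; exact hfar t ht.1 (by omega)]
    rw [prod_map_range'_eq_prod_Ico, Nat.add_sub_cancel' him]
  rw [prod_map_range'_sub_succ x him, ← mul_assoc, hpast, smul_mul_assoc, mul_assoc, hswap,
    mul_smul_comm, smul_smul, mul_assoc, prod_Ico_succ_top him]
  congr 1
  ring

theorem revRootVec_eq_smul_prod (hq : q ≠ 0) {i j : ℕ}
    (hQ : ∀ m, i ≤ m → m + 2 ≤ j → Q m (m + 1) * Q (m + 1) m = q⁻¹)
    (hadj : ∀ m, i ≤ m → m + 2 ≤ j → x m * x (m + 1) = Q m (m + 1) • (x (m + 1) * x m))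
    (hfar : ∀ a b, i ≤ b → b + 2 ≤ a → a < j → x a * x b = Q a b • (x b * x a))
    {n : ℕ} (hin : i < n) (hnj : n ≤ j) :
    revRootVec x Q n i
      = ((q - 1) ^ (n - i - 1) * ∏ b ∈ Ioo i n, ∏ a ∈ Ico i b, Q b a) •
          ((List.range' i (n - i)).map x).prod := by
  induction n, hin using Nat.le_induction with
  | base => simp [revRootVec_succ_self, ← Ico_add_one_left_eq_Ioo]
  | succ n hin ih =>
    obtain ⟨m, rfl⟩ : ∃ m, n = m + 1 := ⟨n - 1, by omega⟩
    have hcomm := mul_prod_range'_eq_smul hq (by omega : i ≤ m) (hQ m (by omega) hnj)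
      (hadj m (by omega) hnj) fun t ht htm => hfar (m + 1) t ht (by omega) (by omega)
    rw [revRootVec_succ_eq_smul_of_mul_eq hin (ih (by omega)) hcomm,
      ← prod_map_range'_sub_succ x (by omega : i ≤ m + 1)]
    congr 1
    rw [← Ico_add_one_left_eq_Ioo, ← Ico_add_one_left_eq_Ioo,
      prod_Ico_succ_top (by omega : i + 1 ≤ m + 1),
      show m + 1 + 1 - i - 1 = m + 1 - i - 1 + 1 by omega, pow_succ]
    ring

end Cartan

theorem stmt_8_general {k A : Type*} [Field k] [Ring A] [Algebra k A]
    (N : ℕ) (hN1 : 1 < N) (q : k) (hq : IsPrimitiveRoot q N)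
    (i j : ℕ) (hij : i < j) (Q : ℕ → ℕ → k)
    (hQ1 : ∀ a b, i ≤ a → a ≤ j - 1 → i ≤ b → b ≤ j - 1 → (a + 1 = b ∨ b + 1 = a) →
      Q a b * Q b a = q⁻¹)
    (x : ℕ → A)
    (hrel1 : ∀ l, i ≤ l → l + 2 ≤ j → x l * x (l + 1) = Q l (l + 1) • (x (l + 1) * x l))
    (hrel2 : ∀ a b, i ≤ a → a ≤ j - 1 → i ≤ b → b ≤ j - 1 → (a + 2 ≤ b ∨ b + 2 ≤ a) →
      x a * x b = Q a b • (x b * x a)) :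
    revRootVec x Q j i
      = ((q - 1) ^ (j - i - 1) * ∏ b ∈ Finset.Ioo i j, ∏ a ∈ Finset.Ico i b, Q b a) •
        ((List.range' i (j - i)).map x).prod :=
  revRootVec_eq_smul_prod (hq.ne_zero (by omega))
    (fun m hm hmj => hQ1 m (m + 1) hm (by omega) (by omega) (by omega) (Or.inl rfl)) hrel1
    (fun a b hb hba haj => hrel2 a b (by omega) (by omega) hb (by omega) (Or.inr hba)) hij le_rfl

/-- Let `q` be a primitive `N`-th root of unity, `N` odd, `N > 1`,
and `(q_{kl})` of Cartan type: `q_{ll} = q`, `q_{l,l+1} q_{l+1,l} = q⁻¹`,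
`q_{kl} q_{lk} = 1` for `|k-l| ≥ 2`.  In any algebra with elements `x_i, …, x_{j-1}`
satisfying the relations of `R_{(1)}`, namely `x_l x_{l+1} = q_{l,l+1} x_{l+1} x_l`
for consecutive indices and `x_k x_l = q_{kl} x_l x_k` for `|k-l| ≥ 2`, the reverse
root vector satisfies
`x_{ji} = (q-1)^{j-i-1} (∏_{i ≤ k < l < j} q_{lk}) x_i x_{i+1} ⋯ x_{j-1}`. -/
theorem stmt_8 {k A : Type*} [Field k] [Ring A] [Algebra k A]
    (N : ℕ) (hNodd : Odd N) (hN1 : 1 < N) (q : k) (hq : IsPrimitiveRoot q N)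
    (i j : ℕ) (hij : i < j) (Q : ℕ → ℕ → k)
    (hQdiag : ∀ l, i ≤ l → l ≤ j - 1 → Q l l = q)
    (hQ1 : ∀ a b, i ≤ a → a ≤ j - 1 → i ≤ b → b ≤ j - 1 → (a + 1 = b ∨ b + 1 = a) →
      Q a b * Q b a = q⁻¹)
    (hQ2 : ∀ a b, i ≤ a → a ≤ j - 1 → i ≤ b → b ≤ j - 1 → (a + 2 ≤ b ∨ b + 2 ≤ a) →
      Q a b * Q b a = 1)
    (x : ℕ → A)
    (hrel1 : ∀ l, i ≤ l → l + 2 ≤ j → x l * x (l + 1) = Q l (l + 1) • (x (l + 1) * x l))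
    (hrel2 : ∀ a b, i ≤ a → a ≤ j - 1 → i ≤ b → b ≤ j - 1 → (a + 2 ≤ b ∨ b + 2 ≤ a) →
      x a * x b = Q a b • (x b * x a)) :
    revRootVec x Q j i
      = ((q - 1) ^ (j - i - 1) * ∏ b ∈ Finset.Ioo i j, ∏ a ∈ Finset.Ico i b, Q b a) •
        ((List.range' i (j - i)).map x).prod :=
  stmt_8_general N hN1 q hq i j hij Q hQ1 x hrel1 hrel2
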